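/- For every integer n ≥ 1, f(n, x, s) = ∑_{k : 2k ≤ n−1} [n−1−k, k]_q · q^{k^2} · x^{n−1−2k} · s^k, where [a, b]_q denotes the Gaussian (q-binomial) coefficient evaluated at q. -/
import Mathlib


open Finset

variable {K : Type*} [Field K]

noncomputable def qFibPos (q x t : K) : ℕ → K
  | 0 => 0
  | 1 => 1
  | n + 2 => x * qFibPos q x t (n + 1) + q ^ n * t * qFibPos q x t n

noncomputable def qFibNeg (q x t : K) : ℕ → K
  | 0 => 0
  | 1 => q / t
  | m + 2 => (qFibNeg q x t m - x * qFibNeg q x t (m + 1)) * q ^ (m + 2) / t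

/-- The Carlitz q-Fibonacci polynomial `f(n, x, t)` for `n : ℤ`, defined by `f 0 = 0`,
`f 1 = 1` and `f n = x * f (n-1) + q^(n-2) * t * f (n-2)`, solved backwards for `n < 0`. -/
noncomputable def qFib (q x t : K) : ℤ → K
  | Int.ofNat n => qFibPos q x t n
  | Int.negSucc m => qFibNeg q x t (m + 1)

/-- The Gaussian (q-binomial) coefficient `[a, b]_q`, defined by `[a,0] = 1`, `[0,b+1] = 0`
and the Pascal-type recurrence `[a, b] = [a-1, b-1] + q^b * [a-1, b]`. -/
noncomputable def gaussBinom (q : K) : ℕ → ℕ → K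
  | _, 0 => 1
  | 0, _ + 1 => 0
  | a + 1, b + 1 => gaussBinom q a b + q ^ (b + 1) * gaussBinom q a (b + 1)

lemma gaussBinom_eq_zero (q : K) : ∀ a b : ℕ, a < b → gaussBinom q a b = 0
  | 0, _ + 1, _ => by simp [gaussBinom]
  | a + 1, b + 1, h => by
    rw [gaussBinom, gaussBinom_eq_zero q a b (by omega),
      gaussBinom_eq_zero q a (b + 1) (by omega)]
    ring

lemma gaussBinom_diag (q : K) : ∀ a : ℕ, gaussBinom q a a = 1
  | 0 => by simp [gaussBinom]
  | a + 1 => by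
    rw [gaussBinom, gaussBinom_diag q a, gaussBinom_eq_zero q a (a + 1) (by omega)]
    ring

lemma gaussBinom_pascal2 (q : K) : ∀ a b : ℕ,
    gaussBinom q (a + 1) (b + 1) = q ^ (a - b) * gaussBinom q a b + gaussBinom q a (b + 1) := by
  intro a
  induction a with
  | zero =>
    intro b
    cases b with
    | zero => simp [gaussBinom]
    | succ c => simp [gaussBinom, gaussBinom_eq_zero q 0 (c + 1) (by omega)]
  | succ a ih =>
    intro b
    cases b with
    | zero =>
      have d1 : gaussBinom q (a + 1 + 1) (0 + 1) =
          1 + q ^ (0 + 1) * gaussBinom q (a + 1) (0 + 1) := by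
        rw [gaussBinom, gaussBinom]
      have d2 : gaussBinom q (a + 1) (0 + 1) =
          1 + q ^ (0 + 1) * gaussBinom q a (0 + 1) := by
        rw [gaussBinom, gaussBinom]
      have i1 := ih 0
      have z1 : gaussBinom q (a + 1) 0 = 1 := by rw [gaussBinom]
      have z2 : gaussBinom q a 0 = 1 := by rw [gaussBinom]
      rw [Nat.sub_zero] at i1
      rw [Nat.sub_zero]
      linear_combination d1 + q * i1 - d2 + q ^ (a + 1) * (z2 - z1)
    | succ c =>
      rcases lt_or_ge a (c + 1) with hc | hc
      · rcases Nat.lt_succ_iff_lt_or_eq.mp hc with hc' | h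
        · rw [gaussBinom_eq_zero q (a + 1 + 1) (c + 1 + 1) (by omega),
            gaussBinom_eq_zero q (a + 1) (c + 1) (by omega),
            gaussBinom_eq_zero q (a + 1) (c + 1 + 1) (by omega)]
          ring
        · rw [h, gaussBinom_diag, gaussBinom_diag,
            gaussBinom_eq_zero q (c + 1) (c + 1 + 1) (by omega),
            show c + 1 - (c + 1) = 0 from by omega]
          ring
      · have d1 : gaussBinom q (a + 1 + 1) (c + 1 + 1) =
            gaussBinom q (a + 1) (c + 1) + q ^ (c + 1 + 1) * gaussBinom q (a + 1) (c + 1 + 1) := by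
          rw [gaussBinom]
        have d2 : gaussBinom q (a + 1) (c + 1) =
            gaussBinom q a c + q ^ (c + 1) * gaussBinom q a (c + 1) := by
          rw [gaussBinom]
        have d3 : gaussBinom q (a + 1) (c + 1 + 1) =
            gaussBinom q a (c + 1) + q ^ (c + 1 + 1) * gaussBinom q a (c + 1 + 1) := by
          rw [gaussBinom]
        have i1 := ih c
        have i2 := ih (c + 1)
        rw [show a - c = (a - (c + 1)) + 1 from by omega] at i1
        rw [show a + 1 - (c + 1) = (a - (c + 1)) + 1 from by omega]
        linear_combination d1 + i1 + q ^ (c + 1 + 1) * i2 - q ^ ((a - (c + 1)) + 1) * d2 - d3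

noncomputable def cterm (q x s : K) (m k : ℕ) : K :=
  gaussBinom q (m - 1 - k) k * q ^ (k ^ 2) * x ^ (m - 1 - 2 * k) * s ^ k

lemma cterm_zero (q x s : K) (m k : ℕ) (hk : 1 ≤ k) (h : m ≤ 2 * k) :
    cterm q x s m k = 0 := by
  unfold cterm
  rw [gaussBinom_eq_zero q _ _ (by omega)]
  ring

noncomputable def qsum (q x s : K) (m : ℕ) : K := ∑ k ∈ Finset.range m, cterm q x s m k

lemma qsum_ext (q x s : K) (m N : ℕ) (hm : 1 ≤ m) (hN : m ≤ N) :
    qsum q x s m = ∑ k ∈ Finset.range N, cterm q x s m k := by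
  unfold qsum
  refine Finset.sum_subset (Finset.range_subset_range.mpr hN) ?_
  intro k hk hk'
  simp only [Finset.mem_range, not_lt] at hk hk'
  exact cterm_zero q x s m k (by omega) (by omega)

lemma cterm_rec (q x s : K) (n k : ℕ) (hn : 1 ≤ n) :
    cterm q x s (n + 2) (k + 1) =
      x * cterm q x s (n + 1) (k + 1) + q ^ n * s * cterm q x s n k := by
  unfold cterm
  rcases lt_trichotomy (2 * k + 1) n with h | h | h
  · obtain ⟨a, rfl⟩ : ∃ a, n = a + 2 * k + 2 := ⟨n - 2 * k - 2, by omega⟩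
    rw [show a + 2 * k + 2 + 2 - 1 - (k + 1) = (a + k + 1) + 1 from by omega,
      gaussBinom_pascal2,
      show a + k + 1 - k = a + 1 from by omega,
      show a + 2 * k + 2 + 1 - 1 - (k + 1) = a + k + 1 from by omega,
      show a + 2 * k + 2 - 1 - k = a + k + 1 from by omega,
      show a + 2 * k + 2 + 2 - 1 - 2 * (k + 1) = a + 1 from by omega,
      show a + 2 * k + 2 + 1 - 1 - 2 * (k + 1) = a from by omega,
      show a + 2 * k + 2 - 1 - 2 * k = a + 1 from by omega]
    ring
  · subst h
    rw [show 2 * k + 1 + 2 - 1 - (k + 1) = k + 1 from by omega,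
      gaussBinom_diag,
      show 2 * k + 1 + 1 - 1 - (k + 1) = k from by omega,
      gaussBinom_eq_zero q k (k + 1) (by omega),
      show 2 * k + 1 - 1 - k = k from by omega,
      gaussBinom_diag,
      show 2 * k + 1 + 2 - 1 - 2 * (k + 1) = 0 from by omega,
      show 2 * k + 1 - 1 - 2 * k = 0 from by omega]
    ring
  · rw [gaussBinom_eq_zero q (n + 2 - 1 - (k + 1)) (k + 1) (by omega),
      gaussBinom_eq_zero q (n + 1 - 1 - (k + 1)) (k + 1) (by omega),
      gaussBinom_eq_zero q (n - 1 - k) k (by omega)]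
    ring

lemma qsum_rec (q x s : K) (n : ℕ) (hn : 1 ≤ n) :
    qsum q x s (n + 2) = x * qsum q x s (n + 1) + q ^ n * s * qsum q x s n := by
  rw [qsum_ext q x s (n + 1) (n + 2) (by omega) (by omega),
    qsum_ext q x s n (n + 1) hn (by omega)]
  show ∑ k ∈ Finset.range (n + 2), cterm q x s (n + 2) k = _
  rw [Finset.sum_range_succ' (cterm q x s (n + 2)) (n + 1),
    Finset.sum_range_succ' (cterm q x s (n + 1)) (n + 1)]
  have h0 : cterm q x s (n + 2) 0 = x * cterm q x s (n + 1) 0 := by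
    unfold cterm
    rw [show n + 2 - 1 - 0 = n + 1 from by omega, show n + 1 - 1 - 0 = n from by omega,
      show gaussBinom q (n + 1) 0 = 1 from by rw [gaussBinom],
      show gaussBinom q n 0 = 1 from by rw [gaussBinom], pow_succ]
    ring
  calc (∑ k ∈ Finset.range (n + 1), cterm q x s (n + 2) (k + 1)) + cterm q x s (n + 2) 0
      = (∑ k ∈ Finset.range (n + 1),
          (x * cterm q x s (n + 1) (k + 1) + q ^ n * s * cterm q x s n k))
        + x * cterm q x s (n + 1) 0 := by
        rw [h0]
        congr 1
        exact Finset.sum_congr rfl fun k _ => cterm_rec q x s n k hn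
    _ = _ := by
        rw [Finset.sum_add_distrib, ← Finset.mul_sum, ← Finset.mul_sum]
        ring

lemma qFibPos_eq (q x s : K) (n : ℕ) : qFibPos q x s (n + 1) = qsum q x s (n + 1) := by
  have key : ∀ m : ℕ, qFibPos q x s (m + 1) = qsum q x s (m + 1) ∧
      qFibPos q x s (m + 2) = qsum q x s (m + 2) := by
    intro m
    induction m with
    | zero =>
      have e1 : qsum q x s 1 = 1 := by
        unfold qsum
        rw [Finset.sum_range_one]
        unfold cterm
        simp [gaussBinom]
      have e2 : qsum q x s 2 = x := by
        unfold qsum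
        rw [Finset.sum_range_succ, Finset.sum_range_one]
        unfold cterm
        simp [gaussBinom]
      exact ⟨by rw [e1]; rfl, by rw [e2]; show x * qFibPos q x s 1 + q ^ 0 * s * qFibPos q x s 0 = x; simp [qFibPos]⟩
    | succ m ih =>
      refine ⟨ih.2, ?_⟩
      show qFibPos q x s (m + 1 + 2) = _
      rw [qFibPos, ih.1, ih.2, ← qsum_rec q x s (m + 1) (by omega)]
  exact (key n).1

theorem qFib_explicit (q x s : K) (hq : q ≠ 0) (hs : s ≠ 0) (n : ℕ) (hn : 1 ≤ n) :
    qFib q x s (n : ℤ) =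
      ∑ k ∈ (Finset.range n).filter (fun k => 2 * k ≤ n - 1),
        gaussBinom q (n - 1 - k) k * q ^ (k ^ 2) * x ^ (n - 1 - 2 * k) * s ^ k := by
  obtain ⟨m, rfl⟩ : ∃ m, n = m + 1 := ⟨n - 1, by omega⟩
  have h1 : qFib q x s ((m + 1 : ℕ) : ℤ) = qFibPos q x s (m + 1) := rfl
  rw [h1, qFibPos_eq]
  unfold qsum cterm
  refine (Finset.sum_filter_of_ne ?_).symm
  intro k hk hne
  simp only [Finset.mem_range] at hk
  by_contra hc
  exact hne (by
    rw [gaussBinom_eq_zero q _ _ (by omega)]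
    ring)
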